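/- arXiv:2108.03556 — 3 statements merged into one kernel-verified Lean document; each statement's English description precedes it below -/
import Mathlib

section
/- Let (g,[·,·],⟨·,·,·⟩;ω) be a finite-dimensional symplectic Lie-Yamaguti algebra over a field K of characteristic 0. Then there exist a unique bilinear operation *: g×g→g and a unique trilinear operation {·,·,·}: g×g×g→g determined by ω(x*y,z) = −ω(y,[x,z]) and ω({x,y,z},w) = ω(x,⟨w,z,y⟩) for all x,y,z,w in g, and (g,*,{·,·,·}) is a pre-Lie-Yamaguti algebra compatible with the given structure, i.e., x*y−y*x=[x,y] and {x,y,z}_D+{x,y,z}−{y,x,z}=⟨x,y,z⟩ for all x,y,z in g. -/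
/-- A map of two variables that is linear in each variable separately. -/
def IsBilin (K : Type*) {M N P : Type*} [Field K] [AddCommGroup M] [Module K M]
    [AddCommGroup N] [Module K N] [AddCommGroup P] [Module K P]
    (f : M → N → P) : Prop :=
  (∀ y, IsLinearMap K fun x => f x y) ∧ (∀ x, IsLinearMap K fun y => f x y)

/-- A map of three variables that is linear in each variable separately. -/
def IsTrilin (K : Type*) {M P : Type*} [Field K] [AddCommGroup M] [Module K M]
    [AddCommGroup P] [Module K P] (f : M → M → M → P) : Prop :=
  (∀ y z, IsLinearMap K fun x => f x y z) ∧
  (∀ x z, IsLinearMap K fun y => f x y z) ∧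
  (∀ x y, IsLinearMap K fun z => f x y z)

/-- A Lie-Yamaguti algebra structure: a bilinear skew-symmetric binary bracket `b` and a
trilinear ternary bracket `t`, skew-symmetric in its first two arguments, satisfying
(LY1)-(LY4). -/
def IsLieYamaguti (K : Type*) {g : Type*} [Field K] [CharZero K] [AddCommGroup g] [Module K g]
    (b : g → g → g) (t : g → g → g → g) : Prop :=
  IsBilin K b ∧ IsTrilin K t ∧
  (∀ x y, b x y = - b y x) ∧
  (∀ x y z, t x y z = - t y x z) ∧
  (∀ x y z, b (b x y) z + b (b y z) x + b (b z x) y + t x y z + t y z x + t z x y = 0) ∧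
  (∀ x y z w, t (b x y) z w + t (b y z) x w + t (b z x) y w = 0) ∧
  (∀ x y z w, t x y (b z w) = b (t x y z) w + b z (t x y w)) ∧
  (∀ x y z w u, t x y (t z w u) = t (t x y z) w u + t z (t x y w) u + t z w (t x y u))

/-- The operator `D(x,y) = μ(y,x) − μ(x,y) + ρ(x)ρ(y) − ρ(y)ρ(x) − ρ([x,y])`. -/
def LYD (K : Type*) {g V : Type*} [Field K] [CharZero K] [AddCommGroup g] [Module K g]
    [AddCommGroup V] [Module K V]
    (b : g → g → g) (ρ : g → Module.End K V) (μ : g → g → Module.End K V)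
    (x y : g) : Module.End K V :=
  μ y x - μ x y + ρ x * ρ y - ρ y * ρ x - ρ (b x y)

/-- A representation of a Lie-Yamaguti algebra `(g, b, t)` on `V`. -/
def IsLYRep (K : Type*) {g V : Type*} [Field K] [CharZero K] [AddCommGroup g] [Module K g]
    [AddCommGroup V] [Module K V]
    (b : g → g → g) (t : g → g → g → g)
    (ρ : g → Module.End K V) (μ : g → g → Module.End K V) : Prop :=
  IsLinearMap K ρ ∧ IsBilin K μ ∧
  (∀ x y z, μ (b x y) z - μ x z * ρ y + μ y z * ρ x = 0) ∧
  (∀ x y z, μ x (b y z) - ρ y * μ x z + ρ z * μ x y = 0) ∧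
  (∀ x y z, ρ (t x y z) = LYD K b ρ μ x y * ρ z - ρ z * LYD K b ρ μ x y) ∧
  (∀ x y z w, μ z w * μ x y - μ y w * μ x z - μ x (t y z w) + LYD K b ρ μ y z * μ x w = 0) ∧
  (∀ x y z w, μ (t x y z) w + μ z (t x y w) = LYD K b ρ μ x y * μ z w - μ z w * LYD K b ρ μ x y)

/-- A relative Rota-Baxter operator on a Lie-Yamaguti algebra `(g, b, t)` with respect to a
representation `(V; ρ, μ)`. -/
def IsRelRB (K : Type*) {g V : Type*} [Field K] [CharZero K] [AddCommGroup g] [Module K g]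
    [AddCommGroup V] [Module K V]
    (b : g → g → g) (t : g → g → g → g)
    (ρ : g → Module.End K V) (μ : g → g → Module.End K V) (T : V → g) : Prop :=
  IsLinearMap K T ∧
  (∀ u v, b (T u) (T v) = T (ρ (T u) v - ρ (T v) u)) ∧
  (∀ u v w, t (T u) (T v) (T w) =
    T (LYD K b ρ μ (T u) (T v) w + μ (T v) (T w) u - μ (T u) (T w) v))

/-- The commutator `[x,y]_C = x*y − y*x`. -/
def preC {A : Type*} [AddCommGroup A] (m : A → A → A) (x y : A) : A := m x y - m y x

/-- The associator `(x,y,z) = (x*y)*z − x*(y*z)`. -/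
def preAssoc {A : Type*} [AddCommGroup A] (m : A → A → A) (x y z : A) : A :=
  m (m x y) z - m x (m y z)

/-- `{x,y,z}_D = {z,y,x} − {z,x,y} + (y,x,z) − (x,y,z)`. -/
def preD {A : Type*} [AddCommGroup A] (m : A → A → A) (br : A → A → A → A) (x y z : A) : A :=
  br z y x - br z x y + preAssoc m y x z - preAssoc m x y z

/-- A pre-Lie-Yamaguti algebra structure on `A`. -/
def IsPreLY (K : Type*) {A : Type*} [Field K] [CharZero K] [AddCommGroup A] [Module K A]
    (m : A → A → A) (br : A → A → A → A) : Prop :=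
  IsBilin K m ∧ IsTrilin K br ∧
  (∀ x y z w, br z (preC m x y) w - br (m y z) x w + br (m x z) y w = 0) ∧
  (∀ x y z w, br x y (preC m z w) = m z (br x y w) - m w (br x y z)) ∧
  (∀ x y z w t, br (br x y z) w t - br (br x y w) z t - br x y (preD m br z w t)
      - br x y (br z w t) + br x y (br w z t) + preD m br z w (br x y t) = 0) ∧
  (∀ x y z w t, br z (preD m br x y w) t + br z (br x y w) t - br z (br y x w) t
      + br z w (preD m br x y t) + br z w (br x y t) - br z w (br y x t)
      = preD m br x y (br z w t) - br (preD m br x y z) w t) ∧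
  (∀ x y z w, m (preD m br x y z) w + m (br x y z) w - m (br y x z) w
      = preD m br x y (m z w) - m z (preD m br x y w))

/-- The ternary bracket `⟨x,y,z⟩_C = {x,y,z}_D + {x,y,z} − {y,x,z}` of the subadjacent
Lie-Yamaguti algebra of a pre-Lie-Yamaguti algebra. -/
def subT {A : Type*} [AddCommGroup A] (m : A → A → A) (br : A → A → A → A) (x y z : A) : A :=
  preD m br x y z + br x y z - br y x z

/-- A symplectic structure on a Lie-Yamaguti algebra `(g, b, t)`: a nondegenerate
skew-symmetric bilinear form satisfying the two cocycle conditions. -/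
def IsSymplectic (K : Type*) {g : Type*} [Field K] [CharZero K] [AddCommGroup g] [Module K g]
    (b : g → g → g) (t : g → g → g → g) (ω : g → g → K) : Prop :=
  IsBilin K ω ∧ (∀ x y, ω x y = - ω y x) ∧ (∀ x, (∀ y, ω x y = 0) → x = 0) ∧
  (∀ x y z, ω x (b y z) + ω y (b z x) + ω z (b x y) = 0) ∧
  (∀ x y z w, ω z (t x y w) - ω x (t w z y) + ω y (t w z x) - ω w (t x y z) = 0)

/-- The dual map `ρ*` defined by `(ρ*(x) α)(v) = −α(ρ(x) v)`. -/
def dualRho (K : Type*) {g V : Type*} [Field K] [CharZero K] [AddCommGroup g] [Module K g]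
    [AddCommGroup V] [Module K V] (ρ : g → Module.End K V) (x : g) :
    Module.End K (Module.Dual K V) := -(ρ x).dualMap

/-- The dual map `μ*` defined by `(μ*(x,y) α)(v) = −α(μ(x,y) v)`. -/
def dualMu (K : Type*) {g V : Type*} [Field K] [CharZero K] [AddCommGroup g] [Module K g]
    [AddCommGroup V] [Module K V] (μ : g → g → Module.End K V) (x y : g) :
    Module.End K (Module.Dual K V) := -(μ x y).dualMap

/-- Left multiplication `L_x` of a pre-Lie-Yamaguti algebra, as a linear endomorphism. -/
def Llin (K : Type*) {A : Type*} [Field K] [CharZero K] [AddCommGroup A] [Module K A]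
    (m : A → A → A) (hm : IsBilin K m) (x : A) : Module.End K A :=
  IsLinearMap.mk' (fun v => m x v) (hm.2 x)

/-- `𝓡(x,y) : z ↦ {z,x,y}` of a pre-Lie-Yamaguti algebra, as a linear endomorphism. -/
def Rlin (K : Type*) {A : Type*} [Field K] [CharZero K] [AddCommGroup A] [Module K A]
    (br : A → A → A → A) (hbr : IsTrilin K br) (x y : A) : Module.End K A :=
  IsLinearMap.mk' (fun v => br v x y) (hbr.1 x y)

/-- `𝓛(x,y) : z ↦ {x,y,z}_D` of a pre-Lie-Yamaguti algebra, as a linear endomorphism. -/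
def Dlin (K : Type*) {A : Type*} [Field K] [CharZero K] [AddCommGroup A] [Module K A]
    (m : A → A → A) (br : A → A → A → A) (hm : IsBilin K m) (hbr : IsTrilin K br)
    (x y : A) : Module.End K A :=
  Rlin K br hbr y x - Rlin K br hbr x y
    + (Llin K m hm (m y x) - Llin K m hm y * Llin K m hm x)
    - (Llin K m hm (m x y) - Llin K m hm x * Llin K m hm y)

/-!
The two operations are ω-transposes of the brackets: `ω(x*y, z) = −ω(y, [x,z])` and
`ω({x,y,z}, w) = ω(x, ⟨w,z,y⟩)`. They exist, are unique and are multilinear because, `g` being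
finite-dimensional, `ω : g → g*` is a linear isomorphism.

Every identity is checked after pairing both sides with an arbitrary `c` through `ω`: the defining
relations move all products and ternary products out of the first slot of `ω`, and what remains is
a linear combination of (LY1)-(LY4), the two cocycle conditions on `ω` and skew-symmetries. The
ternary compatibility comes first: it rewrites `{x,y,z}_D` as `⟨x,y,z⟩ − {x,y,z} + {y,x,z}`, which
turns (P3)-(P5) into consequences of (LY3), (LY4) and the cocycle condition for `⟨·,·,·⟩`.
-/

theorem IsBilin.exists_eq_linearMap {K M N P : Type*} [Field K] [AddCommGroup M] [Module K M]
    [AddCommGroup N] [Module K N] [AddCommGroup P] [Module K P] {f : M → N → P}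
    (hf : IsBilin K f) : ∃ F : M →ₗ[K] N →ₗ[K] P, f = fun x y => F x y :=
  ⟨LinearMap.mk₂ K f (fun _ _ y => (hf.1 y).map_add _ _) (fun _ _ y => (hf.1 y).map_smul _ _)
    (fun x _ _ => (hf.2 x).map_add _ _) (fun _ x _ => (hf.2 x).map_smul _ _), rfl⟩

theorem IsTrilin.exists_eq_linearMap {K M P : Type*} [Field K] [AddCommGroup M] [Module K M]
    [AddCommGroup P] [Module K P] {f : M → M → M → P} (hf : IsTrilin K f) :
    ∃ F : M →ₗ[K] M →ₗ[K] M →ₗ[K] P, f = fun x y z => F x y z :=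
  ⟨LinearMap.mk₂ K (fun x y => IsLinearMap.mk' (f x y) (hf.2.2 x y))
    (fun _ _ y => LinearMap.ext fun z => (hf.1 y z).map_add _ _)
    (fun _ _ y => LinearMap.ext fun z => (hf.1 y z).map_smul _ _)
    (fun x _ _ => LinearMap.ext fun z => (hf.2.1 x z).map_add _ _)
    (fun _ x _ => LinearMap.ext fun z => (hf.2.1 x z).map_smul _ _), rfl⟩

theorem LinearMap.isBilin {K M N P : Type*} [Field K] [AddCommGroup M] [Module K M]
    [AddCommGroup N] [Module K N] [AddCommGroup P] [Module K P] (F : M →ₗ[K] N →ₗ[K] P) :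
    IsBilin K fun x y => F x y :=
  ⟨fun y => (F.flip y).isLinear, fun x => (F x).isLinear⟩

theorem LinearMap.isTrilin {K M P : Type*} [Field K] [AddCommGroup M] [Module K M]
    [AddCommGroup P] [Module K P] (F : M →ₗ[K] M →ₗ[K] M →ₗ[K] P) :
    IsTrilin K fun x y z => F x y z :=
  ⟨fun y z => ((F.flip y).flip z).isLinear, fun x z => ((F x).flip z).isLinear,
    fun x y => (F x y).isLinear⟩

section SymplecticLieYamaguti

variable {K g : Type*} [Field K] [AddCommGroup g] [Module K g] {ω : g →ₗ[K] g →ₗ[K] K}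

theorem eq_of_forall_pairing_eq (hω : ω.SeparatingLeft) {u v : g} (h : ∀ c, ω u c = ω v c) :
    u = v :=
  sub_eq_zero.1 <| hω _ fun c => by rw [map_sub, LinearMap.sub_apply, h, sub_self]

theorem isLinearMap_of_pairing {M : Type*} [AddCommGroup M] [Module K M] (hω : ω.SeparatingLeft)
    {F : M → g} (hF : ∀ z, IsLinearMap K fun x => ω (F x) z) : IsLinearMap K F :=
  ⟨fun x y => eq_of_forall_pairing_eq hω fun z => by
      rw [(hF z).map_add, map_add, LinearMap.add_apply],
    fun r x => eq_of_forall_pairing_eq hω fun z => by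
      rw [(hF z).map_smul, map_smul, LinearMap.smul_apply]⟩

theorem surjective_of_separatingLeft [FiniteDimensional K g] (hω : ω.SeparatingLeft) :
    Function.Surjective ω :=
  (LinearMap.injective_iff_surjective_of_finrank_eq_finrank Subspace.dual_finrank_eq.symm).1 <|
    LinearMap.ker_eq_bot.1 <| LinearMap.separatingLeft_iff_ker_eq_bot.1 hω

theorem existsUnique_mul [FiniteDimensional K g] (hω : ω.SeparatingLeft) (b : g →ₗ[K] g →ₗ[K] g) :
    ∃! m : g → g → g, IsBilin K m ∧ ∀ x y z, ω (m x y) z = -ω y (b x z) := by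
  have hrepr (x y : g) : ∃ v, ∀ z, ω v z = -ω y (b x z) := by
    obtain ⟨v, hv⟩ := surjective_of_separatingLeft hω (-(ω y ∘ₗ b x))
    exact ⟨v, fun z => by rw [hv]; rfl⟩
  choose m hm using hrepr
  refine ⟨m, ⟨⟨fun y => isLinearMap_of_pairing hω fun z => ?_,
    fun x => isLinearMap_of_pairing hω fun z => ?_⟩, hm⟩, fun m' hm' => ?_⟩
  · simp only [hm]
    exact (-(ω y ∘ₗ b.flip z)).isLinear
  · simp only [hm]
    exact (-(ω.flip (b x z))).isLinear
  · funext x y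
    exact eq_of_forall_pairing_eq hω fun z => by rw [hm'.2, hm]

theorem existsUnique_ternary [FiniteDimensional K g] (hω : ω.SeparatingLeft)
    (t : g →ₗ[K] g →ₗ[K] g →ₗ[K] g) :
    ∃! br : g → g → g → g, IsTrilin K br ∧ ∀ x y z w, ω (br x y z) w = ω x (t w z y) := by
  have hrepr (x y z : g) : ∃ v, ∀ w, ω v w = ω x (t w z y) := by
    obtain ⟨v, hv⟩ := surjective_of_separatingLeft hω (ω x ∘ₗ (t.flip z).flip y)
    exact ⟨v, fun w => by rw [hv]; rfl⟩
  choose br hbr using hrepr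
  refine ⟨br, ⟨⟨fun y z => isLinearMap_of_pairing hω fun w => ?_,
    fun x z => isLinearMap_of_pairing hω fun w => ?_,
    fun x y => isLinearMap_of_pairing hω fun w => ?_⟩, hbr⟩, fun br' hbr' => ?_⟩
  · simp only [hbr]
    exact (ω.flip (t w z y)).isLinear
  · simp only [hbr]
    exact (ω x ∘ₗ t w z).isLinear
  · simp only [hbr]
    exact (ω x ∘ₗ (t w).flip y).isLinear
  · funext x y z
    exact eq_of_forall_pairing_eq hω fun w => by rw [hbr'.2, hbr]

variable {b m : g →ₗ[K] g →ₗ[K] g} {t br : g →ₗ[K] g →ₗ[K] g →ₗ[K] g}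

theorem preC_eq (hω : ω.SeparatingLeft) (hωskew : ∀ x y, ω x y = -ω y x)
    (hωb : ∀ x y z, ω x (b y z) + ω y (b z x) + ω z (b x y) = 0)
    (hb : ∀ x y, b x y = -b y x) (hm : ∀ x y z, ω (m x y) z = -ω y (b x z)) (x y : g) :
    preC (fun x y => m x y) x y = b x y :=
  eq_of_forall_pairing_eq hω fun c => by
    linear_combination
      (norm := (simp only [preC, map_sub, map_neg, LinearMap.sub_apply, hm]; ring1))
      hωb x y c - congrArg (ω y) (hb x c) - hωskew c (b x y)

theorem subT_eq (hω : ω.SeparatingLeft) (hωskew : ∀ x y, ω x y = -ω y x)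
    (hωb : ∀ x y z, ω x (b y z) + ω y (b z x) + ω z (b x y) = 0)
    (hωt : ∀ x y z w, ω z (t x y w) - ω x (t w z y) + ω y (t w z x) - ω w (t x y z) = 0)
    (hb : ∀ x y, b x y = -b y x) (ht : ∀ x y z, t x y z = -t y x z)
    (hly1 : ∀ x y z, b (b x y) z + b (b y z) x + b (b z x) y + t x y z + t y z x + t z x y = 0)
    (hm : ∀ x y z, ω (m x y) z = -ω y (b x z)) (hbr : ∀ x y z w, ω (br x y z) w = ω x (t w z y))
    (x y z : g) :
    subT (fun x y => m x y) (fun x y z => br x y z) x y z = t x y z :=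
  eq_of_forall_pairing_eq hω fun c => by
    linear_combination (norm := (simp only [subT, preD, preAssoc, preC, map_add, map_sub, map_neg,
        map_zero, LinearMap.add_apply, LinearMap.sub_apply, LinearMap.neg_apply, hm, hbr]; ring1))
      -congrArg (fun v => ω z (b v c)) (preC_eq hω hωskew hωb hb hm y x)
      - congrArg (fun v => ω z (b v c)) (hb y x) - congrArg (ω z) (hb x (b y c))
      + congrArg (ω z) (hb y (b x c)) - congrArg (fun v => ω z (b v y)) (hb x c)
      + congrArg (ω z) (hly1 x y c) - congrArg (ω z) (ht y c x) - hωt x y z c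
      - hωskew c (t x y z)

theorem preD_eq (hsubT : ∀ x y z, subT (fun x y => m x y) (fun x y z => br x y z) x y z = t x y z)
    (x y z : g) :
    preD (fun x y => m x y) (fun x y z => br x y z) x y z = t x y z - br x y z + br y x z := by
  rw [← hsubT]; unfold subT; abel

theorem isPreLY_P1 (hω : ω.SeparatingLeft) (hb : ∀ x y, b x y = -b y x)
    (hly3 : ∀ x y z w, t x y (b z w) = b (t x y z) w + b z (t x y w))
    (hm : ∀ x y z, ω (m x y) z = -ω y (b x z)) (hbr : ∀ x y z w, ω (br x y z) w = ω x (t w z y))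
    (hC : ∀ x y, preC (fun x y => m x y) x y = b x y) (x y z w : g) :
    br z (preC (fun x y => m x y) x y) w - br (m y z) x w + br (m x z) y w = 0 :=
  hω _ fun c => by
    rw [hC]
    linear_combination (norm := (simp only [map_add, map_sub, map_neg, LinearMap.add_apply,
        LinearMap.sub_apply, hm, hbr]; ring1))
      congrArg (ω z) (hly3 c w x y) + congrArg (ω z) (hb y (t c w x))

theorem isPreLY_P2 (hω : ω.SeparatingLeft) (hb : ∀ x y, b x y = -b y x)
    (ht : ∀ x y z, t x y z = -t y x z)
    (hly2 : ∀ x y z w, t (b x y) z w + t (b y z) x w + t (b z x) y w = 0)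
    (hm : ∀ x y z, ω (m x y) z = -ω y (b x z)) (hbr : ∀ x y z w, ω (br x y z) w = ω x (t w z y))
    (hC : ∀ x y, preC (fun x y => m x y) x y = b x y) (x y z w : g) :
    br x y (preC (fun x y => m x y) z w) = m z (br x y w) - m w (br x y z) :=
  eq_of_forall_pairing_eq hω fun c => by
    rw [hC]
    linear_combination (norm := (simp only [map_add, map_sub, map_neg, map_zero,
        LinearMap.sub_apply, LinearMap.neg_apply, hm, hbr]; ring1))
      congrArg (ω x) (hly2 c w z y) + congrArg (ω x) (ht c (b z w) y)
      - congrArg (fun v => ω x (t v z y)) (hb w c) - congrArg (fun v => ω x (t v c y)) (hb w z)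

theorem isPreLY_P3 (hω : ω.SeparatingLeft) (hωskew : ∀ x y, ω x y = -ω y x)
    (hωt : ∀ x y z w, ω z (t x y w) - ω x (t w z y) + ω y (t w z x) - ω w (t x y z) = 0)
    (ht : ∀ x y z, t x y z = -t y x z)
    (hly4 : ∀ x y z w u, t x y (t z w u) = t (t x y z) w u + t z (t x y w) u + t z w (t x y u))
    (hbr : ∀ x y z w, ω (br x y z) w = ω x (t w z y))
    (hD : ∀ x y z, preD (fun x y => m x y) (fun x y z => br x y z) x y z
      = t x y z - br x y z + br y x z) (x y z w u : g) :
    br (br x y z) w u - br (br x y w) z u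
      - br x y (preD (fun x y => m x y) (fun x y z => br x y z) z w u) - br x y (br z w u) + br x y (br w z u)
      + preD (fun x y => m x y) (fun x y z => br x y z) z w (br x y u) = 0 :=
  hω _ fun c => by
    rw [hD, hD]
    linear_combination (norm := (simp only [map_add, map_sub, map_neg, LinearMap.add_apply,
        LinearMap.sub_apply, hbr]; ring1))
      hωt c (br x y u) w z + congrArg (ω x) (hly4 c u z w y) + congrArg (ω x) (hly4 z w c u y)
      + hωskew c (t z w (br x y u)) + congrArg (ω x) (ht (t c u w) z y)

theorem isPreLY_P4 (hω : ω.SeparatingLeft) (hωskew : ∀ x y, ω x y = -ω y x)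
    (hωt : ∀ x y z w, ω z (t x y w) - ω x (t w z y) + ω y (t w z x) - ω w (t x y z) = 0)
    (ht : ∀ x y z, t x y z = -t y x z)
    (hly4 : ∀ x y z w u, t x y (t z w u) = t (t x y z) w u + t z (t x y w) u + t z w (t x y u))
    (hbr : ∀ x y z w, ω (br x y z) w = ω x (t w z y))
    (hD : ∀ x y z, preD (fun x y => m x y) (fun x y z => br x y z) x y z
      = t x y z - br x y z + br y x z) (x y z w u : g) :
    br z (preD (fun x y => m x y) (fun x y z => br x y z) x y w) u + br z (br x y w) u
        - br z (br y x w) u + br z w (preD (fun x y => m x y) (fun x y z => br x y z) x y u)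
        + br z w (br x y u) - br z w (br y x u)
      = preD (fun x y => m x y) (fun x y z => br x y z) x y (br z w u)
        - br (preD (fun x y => m x y) (fun x y z => br x y z) x y z) w u :=
  eq_of_forall_pairing_eq hω fun c => by
    simp only [hD]
    linear_combination (norm := (simp only [map_add, map_sub, map_neg, LinearMap.add_apply,
        LinearMap.sub_apply, hbr]; ring1))
      -hωt c (br z w u) y x - hωt x y (t c u w) z - congrArg (ω z) (hly4 x y c u w)
      - hωskew c (t x y (br z w u)) + hωskew (t c u w) (t x y z)
      - congrArg (ω x) (ht (t c u w) z y) + congrArg (ω y) (ht (t c u w) z x)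

theorem isPreLY_P5 (hω : ω.SeparatingLeft) (hωskew : ∀ x y, ω x y = -ω y x)
    (hωt : ∀ x y z w, ω z (t x y w) - ω x (t w z y) + ω y (t w z x) - ω w (t x y z) = 0)
    (ht : ∀ x y z, t x y z = -t y x z)
    (hly3 : ∀ x y z w, t x y (b z w) = b (t x y z) w + b z (t x y w))
    (hm : ∀ x y z, ω (m x y) z = -ω y (b x z)) (hbr : ∀ x y z w, ω (br x y z) w = ω x (t w z y))
    (hD : ∀ x y z, preD (fun x y => m x y) (fun x y z => br x y z) x y z
      = t x y z - br x y z + br y x z) (x y z w : g) :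
    m (preD (fun x y => m x y) (fun x y z => br x y z) x y z) w + m (br x y z) w - m (br y x z) w
      = preD (fun x y => m x y) (fun x y z => br x y z) x y (m z w)
        - m z (preD (fun x y => m x y) (fun x y z => br x y z) x y w) :=
  eq_of_forall_pairing_eq hω fun c => by
    simp only [hD]
    linear_combination (norm := (simp only [map_add, map_sub, map_neg, LinearMap.add_apply,
        LinearMap.sub_apply, hm, hbr]; ring1))
      -hωt c (m z w) y x + hωt w (b z c) y x + congrArg (ω w) (hly3 x y z c)
      - hωskew c (t x y (m z w)) - hωskew (t x y w) (b z c)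
      + congrArg (ω x) (ht w (b z c) y) - congrArg (ω y) (ht w (b z c) x)

theorem isPreLY [CharZero K] (hω : ω.SeparatingLeft) (hωskew : ∀ x y, ω x y = -ω y x)
    (hωb : ∀ x y z, ω x (b y z) + ω y (b z x) + ω z (b x y) = 0)
    (hωt : ∀ x y z w, ω z (t x y w) - ω x (t w z y) + ω y (t w z x) - ω w (t x y z) = 0)
    (hb : ∀ x y, b x y = -b y x) (ht : ∀ x y z, t x y z = -t y x z)
    (hly1 : ∀ x y z, b (b x y) z + b (b y z) x + b (b z x) y + t x y z + t y z x + t z x y = 0)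
    (hly2 : ∀ x y z w, t (b x y) z w + t (b y z) x w + t (b z x) y w = 0)
    (hly3 : ∀ x y z w, t x y (b z w) = b (t x y z) w + b z (t x y w))
    (hly4 : ∀ x y z w u, t x y (t z w u) = t (t x y z) w u + t z (t x y w) u + t z w (t x y u))
    (hm : ∀ x y z, ω (m x y) z = -ω y (b x z)) (hbr : ∀ x y z w, ω (br x y z) w = ω x (t w z y)) :
    IsPreLY K (fun x y => m x y) (fun x y z => br x y z) :=
  have hC := preC_eq hω hωskew hωb hb hm
  have hD := preD_eq (subT_eq hω hωskew hωb hωt hb ht hly1 hm hbr)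
  ⟨m.isBilin, br.isTrilin, isPreLY_P1 hω hb hly3 hm hbr hC, isPreLY_P2 hω hb ht hly2 hm hbr hC,
    isPreLY_P3 hω hωskew hωt ht hly4 hbr hD, isPreLY_P4 hω hωskew hωt ht hly4 hbr hD,
    isPreLY_P5 hω hωskew hωt ht hly3 hm hbr hD⟩

end SymplecticLieYamaguti

/-- a symplectic Lie-Yamaguti algebra carries a unique compatible
pre-Lie-Yamaguti algebra structure determined by `ω`. -/
theorem statement15 (K g : Type*) [Field K] [CharZero K] [AddCommGroup g] [Module K g]
    [FiniteDimensional K g]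
    (b : g → g → g) (t : g → g → g → g) (h : IsLieYamaguti K b t)
    (ω : g → g → K) (hω : IsSymplectic K b t ω) :
    (∃! m : g → g → g, IsBilin K m ∧ ∀ x y z, ω (m x y) z = - ω y (b x z)) ∧
    (∃! br : g → g → g → g, IsTrilin K br ∧ ∀ x y z w, ω (br x y z) w = ω x (t w z y)) ∧
    (∀ (m : g → g → g) (br : g → g → g → g),
        (IsBilin K m ∧ ∀ x y z, ω (m x y) z = - ω y (b x z)) →
        (IsTrilin K br ∧ ∀ x y z w, ω (br x y z) w = ω x (t w z y)) →
        IsPreLY K m br ∧ (∀ x y, m x y - m y x = b x y) ∧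
        (∀ x y z, preD m br x y z + br x y z - br y x z = t x y z)) := by
  obtain ⟨B, rfl⟩ := h.1.exists_eq_linearMap
  obtain ⟨T, rfl⟩ := h.2.1.exists_eq_linearMap
  obtain ⟨W, rfl⟩ := hω.1.exists_eq_linearMap
  obtain ⟨-, -, hb, ht, hly1, hly2, hly3, hly4⟩ := h
  obtain ⟨-, hωskew, hωnd, hωb, hωt⟩ := hω
  refine ⟨existsUnique_mul hωnd B, existsUnique_ternary hωnd T, ?_⟩
  rintro m br ⟨hmBilin, hmω⟩ ⟨hbrTrilin, hbrω⟩
  obtain ⟨M, rfl⟩ := hmBilin.exists_eq_linearMap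
  obtain ⟨Br, rfl⟩ := hbrTrilin.exists_eq_linearMap
  exact ⟨isPreLY hωnd hωskew hωb hωt hb ht hly1 hly2 hly3 hly4 hmω hbrω,
    preC_eq hωnd hωskew hωb hb hmω, subT_eq hωnd hωskew hωb hωt hb ht hly1 hmω hbrω⟩
end

section
/- Let (g,[·,·],⟨·,·,·⟩;ω) be a finite-dimensional symplectic Lie-Yamaguti algebra over a field K of characteristic 0, and let (*, {·,·,·}) be the compatible pre-Lie-Yamaguti algebra structure on g determined by ω(x*y,z) = −ω(y,[x,z]) and ω({x,y,z},w) = ω(x,⟨w,z,y⟩) for all x,y,z,w in g. Then for all x,y,z,w in g: ω({x,y,z}_D,w) = −ω(z,⟨x,y,w⟩), where {x,y,z}_D := {z,y,x}−{z,x,y}+(y,x,z)−(x,y,z) and (x,y,z) := (x*y)*z−x*(y*z). -/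
theorem IsSymplectic.apply_sub_apply_eq {K g : Type*} [Field K] [CharZero K] [AddCommGroup g]
    [Module K g] {b : g → g → g} {t : g → g → g → g} {ω : g → g → K}
    (hω : IsSymplectic K b t ω) (x y z w : g) :
    ω x (t w z y) - ω y (t w z x) = ω (t x y z) w + ω z (t x y w) := by
  rw [hω.2.1 (t x y z) w]
  linear_combination -hω.2.2.2.2 x y z w

theorem statement16_general (K g : Type*) [Field K] [CharZero K] [AddCommGroup g] [Module K g]
    (b : g → g → g) (t : g → g → g → g)
    (ω : g → g → K) (hω : IsSymplectic K b t ω)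
    (m : g → g → g) (br : g → g → g → g)
    (hbr : ∀ x y z w, ω (br x y z) w = ω x (t w z y))
    (hc2 : ∀ x y z, preD m br x y z + br x y z - br y x z = t x y z) :
    ∀ x y z w, ω (preD m br x y z) w = - ω z (t x y w) := by
  intro x y z w
  have hD : preD m br x y z = t x y z - (br x y z - br y x z) := by
    rw [← hc2 x y z]
    abel
  have hω_left := hω.1.1 w
  calc ω (preD m br x y z) w
      = ω (t x y z) w - (ω (br x y z) w - ω (br y x z) w) := by
        rw [hD, hω_left.map_sub, hω_left.map_sub]
    _ = ω (t x y z) w - (ω x (t w z y) - ω y (t w z x)) := by rw [hbr, hbr]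
    _ = - ω z (t x y w) := by
        rw [hω.apply_sub_apply_eq]
        ring

/-- for the compatible pre-Lie-Yamaguti structure of a symplectic
Lie-Yamaguti algebra, `ω({x,y,z}_D, w) = −ω(z, ⟨x,y,w⟩)`. -/
theorem statement16 (K g : Type*) [Field K] [CharZero K] [AddCommGroup g] [Module K g]
    [FiniteDimensional K g]
    (b : g → g → g) (t : g → g → g → g) (h : IsLieYamaguti K b t)
    (ω : g → g → K) (hω : IsSymplectic K b t ω)
    (m : g → g → g) (br : g → g → g → g) (hpre : IsPreLY K m br)
    (hm : ∀ x y z, ω (m x y) z = - ω y (b x z))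
    (hbr : ∀ x y z w, ω (br x y z) w = ω x (t w z y))
    (hc1 : ∀ x y, m x y - m y x = b x y)
    (hc2 : ∀ x y z, preD m br x y z + br x y z - br y x z = t x y z) :
    ∀ x y z w, ω (preD m br x y z) w = - ω z (t x y w) :=
  statement16_general K g b t ω hω m br hbr hc2
end

section
/- Let (A,*,{·,·,·};ω) be a quadratic pre-Lie-Yamaguti algebra. Then for all x,y,z,w in A: ω({x,y,z}_D,w) = −ω(z,⟨x,y,w⟩_C), where {x,y,z}_D := {z,y,x}−{z,x,y}+(y,x,z)−(x,y,z), (x,y,z) := (x*y)*z−x*(y*z), and ⟨x,y,w⟩_C := {x,y,w}_D+{x,y,w}−{y,x,w}. -/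
/-!
The two invariance conditions on `ω` move `*` and `{·,·,·}` from the first argument of `ω` to
the second, so `ω({x,y,z}_D, w) = ω(z, E)` for an explicit `E` built from `w`, `x`, `y`; that
`E = −⟨x,y,w⟩_C` is then a formal identity obtained by expanding both sides.
-/

section QuadraticPreLY

variable {K A : Type*} [Field K] [AddCommGroup A] [Module K A]
  {m : A → A → A} {br : A → A → A → A} {ω : A → A → K}

theorem subT_sub_subT_swap_add_preC (hm : IsBilin K m) (x y w : A) :
    subT m br w x y - subT m br w y x + preC m y (preC m x w) - preC m x (preC m y w)
      + preC m (preC m x y) w = - subT m br x y w := by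
  have hm₁ : ∀ a b c, m (a - b) c = m a c - m b c := fun a b c => (hm.1 c).map_sub a b
  have hm₂ : ∀ a b c, m a (b - c) = m a b - m a c := fun a b c => (hm.2 a).map_sub b c
  simp only [subT, preD, preC, preAssoc, hm₁, hm₂]
  abel

theorem omega_preAssoc_left (hω : IsBilin K ω)
    (hq1 : ∀ x y z, ω (m x y) z = - ω y (preC m x z)) (a b z w : A) :
    ω (preAssoc m a b z) w = ω z (- preC m b (preC m a w) - preC m (m a b) w) := by
  calc ω (preAssoc m a b z) w = ω (m (m a b) z) w - ω (m a (m b z)) w :=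
        (hω.1 w).map_sub _ _
    _ = - ω z (preC m (m a b) w) - ω z (preC m b (preC m a w)) := by
        rw [hq1, hq1, hq1, neg_neg]
    _ = ω z (- preC m b (preC m a w) - preC m (m a b) w) := by
        rw [(hω.2 z).map_sub, (hω.2 z).map_neg]
        ring

theorem omega_preD_left (hm : IsBilin K m) (hω : IsBilin K ω)
    (hq1 : ∀ x y z, ω (m x y) z = - ω y (preC m x z))
    (hq2 : ∀ x y z w, ω (br x y z) w = ω x (subT m br w z y)) (x y z w : A) :
    ω (preD m br x y z) w = ω z
      (subT m br w x y - subT m br w y x + preC m y (preC m x w) - preC m x (preC m y w)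
        + preC m (preC m x y) w) := by
  have hω₁ := hω.1 w
  have hω₂ := hω.2 z
  have hC : preC m (preC m x y) w = preC m (m x y) w - preC m (m y x) w := by
    simp only [preC, (hm.1 w).map_sub, (hm.2 w).map_sub]
    abel
  simp only [preD, hω₁.map_add, hω₁.map_sub, hq2, omega_preAssoc_left hω hq1, hC,
    hω₂.map_add, hω₂.map_sub, hω₂.map_neg]
  ring

end QuadraticPreLY

theorem statement18_general (K A : Type*) [Field K] [CharZero K] [AddCommGroup A] [Module K A]
    (m : A → A → A) (br : A → A → A → A) (h : IsPreLY K m br)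
    (ω : A → A → K) (hbil : IsBilin K ω)
    (hq1 : ∀ x y z, ω (m x y) z = - ω y (preC m x z))
    (hq2 : ∀ x y z w, ω (br x y z) w = ω x (subT m br w z y)) :
    ∀ x y z w, ω (preD m br x y z) w = - ω z (subT m br x y w) := by
  intro x y z w
  rw [omega_preD_left h.1 hbil hq1 hq2, subT_sub_subT_swap_add_preC h.1, (hbil.2 z).map_neg]

/-- in a quadratic pre-Lie-Yamaguti algebra,
`ω({x,y,z}_D, w) = −ω(z, ⟨x,y,w⟩_C)`. -/
theorem statement18 (K A : Type*) [Field K] [CharZero K] [AddCommGroup A] [Module K A]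
    (m : A → A → A) (br : A → A → A → A) (h : IsPreLY K m br)
    (ω : A → A → K) (hbil : IsBilin K ω)
    (hskew : ∀ x y, ω x y = - ω y x)
    (hnd : ∀ x, (∀ y, ω x y = 0) → x = 0)
    (hq1 : ∀ x y z, ω (m x y) z = - ω y (preC m x z))
    (hq2 : ∀ x y z w, ω (br x y z) w = ω x (subT m br w z y)) :
    ∀ x y z w, ω (preD m br x y z) w = - ω z (subT m br x y w) :=
  statement18_general K A m br h ω hbil hq1 hq2
end
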